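/- arXiv:2205.14936 — 8 statements merged into one kernel-verified Lean document; each statement's English description precedes it below -/
import Mathlib

section
/- Each of the following fifteen quadruples (x1,x2,x3,x4) of rational numbers satisfies both 0 < x1 < x3 ≤ x4 < x2 ≤ 1/2 and the identity sin(x1·π)·sin(x2·π) = sin(x3·π)·sin(x4·π): (1/21, 8/21, 1/14, 3/14), (1/14, 5/14, 2/21, 5/21), (4/21, 10/21, 3/14, 5/14), (1/20, 9/20, 1/15, 4/15), (2/15, 7/15, 3/20, 7/20), (1/30, 3/10, 1/15, 2/15), (1/15, 7/15, 1/10, 7/30), (1/10, 13/30, 2/15, 4/15), (4/15, 7/15, 3/10, 11/30), (1/30, 11/30, 1/10, 1/10), (7/30, 13/30, 3/10, 3/10), (1/15, 4/15, 1/10, 1/6), (2/15, 7/15, 1/6, 3/10), (1/12, 5/12, 1/10, 3/10), (1/10, 3/10, 1/6, 1/6). -/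
open Real

/-- The fifteen sporadic quadruples of Table 3.1. -/
def sporadicTable : List (ℚ × ℚ × ℚ × ℚ) :=
  [(1/21, 8/21, 1/14, 3/14), (1/14, 5/14, 2/21, 5/21), (4/21, 10/21, 3/14, 5/14),
   (1/20, 9/20, 1/15, 4/15), (2/15, 7/15, 3/20, 7/20), (1/30, 3/10, 1/15, 2/15),
   (1/15, 7/15, 1/10, 7/30), (1/10, 13/30, 2/15, 4/15), (4/15, 7/15, 3/10, 11/30),
   (1/30, 11/30, 1/10, 1/10), (7/30, 13/30, 3/10, 3/10), (1/15, 4/15, 1/10, 1/6),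
   (2/15, 7/15, 1/6, 3/10), (1/12, 5/12, 1/10, 3/10), (1/10, 3/10, 1/6, 1/6)]

private lemma twoSinSin (x y : ℝ) :
    2 * (Real.sin x * Real.sin y) = Real.cos (x - y) - Real.cos (x + y) := by
  rw [Real.cos_sub, Real.cos_add]; ring

private lemma key {a b c d : ℝ}
    (h : Real.cos (a - b) - Real.cos (a + b) = Real.cos (c - d) - Real.cos (c + d)) :
    Real.sin a * Real.sin b = Real.sin c * Real.sin d := by
  have h1 := twoSinSin a b
  have h2 := twoSinSin c d
  linarith

private lemma cos_two_pi_div_five' : Real.cos (2 * π / 5) = (√5 - 1) / 4 := by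
  have h : (2 * π / 5) = 2 * (π / 5) := by ring
  have h5 : (√5) ^ 2 = 5 := Real.sq_sqrt (by norm_num)
  rw [h, Real.cos_two_mul, Real.cos_pi_div_five]
  nlinarith [h5]

private lemma cos_pi_div_seven_poly :
    8 * Real.cos (π / 7) ^ 3 - 4 * Real.cos (π / 7) ^ 2 - 4 * Real.cos (π / 7) + 1 = 0 := by
  set c := Real.cos (π / 7) with hc
  set s := Real.sin (π / 7) with hs
  have hsc : s ^ 2 = 1 - c ^ 2 := Real.sin_sq _
  have h2c : Real.cos (2 * (π / 7)) = 2 * c ^ 2 - 1 := Real.cos_two_mul _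
  have h2s : Real.sin (2 * (π / 7)) = 2 * s * c := Real.sin_two_mul _
  have h3c : Real.cos (3 * (π / 7)) = 4 * c ^ 3 - 3 * c := by
    rw [show 3 * (π / 7) = 2 * (π / 7) + π / 7 by ring, Real.cos_add, h2c, h2s]
    linear_combination (-2 * c) * hsc
  have h3s : Real.sin (3 * (π / 7)) = s * (4 * c ^ 2 - 1) := by
    rw [show 3 * (π / 7) = 2 * (π / 7) + π / 7 by ring, Real.sin_add, h2c, h2s]
    ring
  have h4c : Real.cos (4 * (π / 7)) = 8 * c ^ 4 - 8 * c ^ 2 + 1 := by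
    rw [show 4 * (π / 7) = 2 * (2 * (π / 7)) by ring, Real.cos_two_mul, h2c]
    ring
  have h4s : Real.sin (4 * (π / 7)) = s * (8 * c ^ 3 - 4 * c) := by
    rw [show 4 * (π / 7) = 2 * (2 * (π / 7)) by ring, Real.sin_two_mul, h2c, h2s]
    ring
  have h7 : Real.cos (7 * (π / 7)) = -1 := by
    rw [show 7 * (π / 7) = π by ring, Real.cos_pi]
  have hexp : Real.cos (7 * (π / 7)) = 64 * c ^ 7 - 112 * c ^ 5 + 56 * c ^ 3 - 7 * c := by
    rw [show 7 * (π / 7) = 4 * (π / 7) + 3 * (π / 7) by ring, Real.cos_add, h4c, h4s, h3c, h3s]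
    linear_combination (-(8 * c ^ 3 - 4 * c) * (4 * c ^ 2 - 1)) * hsc
  have hfac : (c + 1) * (8 * c ^ 3 - 4 * c ^ 2 - 4 * c + 1) ^ 2 = 0 := by
    rw [hexp] at h7; linear_combination h7
  have hcpos : (0 : ℝ) < c := by
    rw [hc]
    apply Real.cos_pos_of_mem_Ioo
    constructor <;> nlinarith [Real.pi_pos]
  have hne : c + 1 ≠ 0 := by positivity
  have hsq : (8 * c ^ 3 - 4 * c ^ 2 - 4 * c + 1) ^ 2 = 0 := by
    rcases mul_eq_zero.mp hfac with h | h
    · exact absurd h hne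
    · exact h
  exact pow_eq_zero_iff (by norm_num) |>.mp hsq

private lemma hepta :
    Real.cos (π / 7) - Real.cos (2 * π / 7) + Real.cos (3 * π / 7) = 1 / 2 := by
  have h2c : Real.cos (2 * π / 7) = 2 * Real.cos (π / 7) ^ 2 - 1 := by
    rw [show 2 * π / 7 = 2 * (π / 7) by ring]; exact Real.cos_two_mul _
  have h3c : Real.cos (3 * π / 7) = 4 * Real.cos (π / 7) ^ 3 - 3 * Real.cos (π / 7) := by
    have hsc : Real.sin (π / 7) ^ 2 = 1 - Real.cos (π / 7) ^ 2 := Real.sin_sq _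
    rw [show 3 * π / 7 = 2 * (π / 7) + π / 7 by ring, Real.cos_add, Real.cos_two_mul,
      Real.sin_two_mul]
    linear_combination (-2 * Real.cos (π / 7)) * hsc
  have := cos_pi_div_seven_poly
  rw [h2c, h3c]
  linarith

private lemma r1 : Real.cos (π / 15) - Real.cos (4 * π / 15) = (√5 - 1) / 4 := by
  have h := twoSinSin (π / 6) (π / 10)
  rw [show π / 6 - π / 10 = π / 15 by ring, show π / 6 + π / 10 = 4 * π / 15 by ring,
    Real.sin_pi_div_six, show π / 10 = π / 2 - 2 * π / 5 by ring,
    Real.sin_pi_div_two_sub, cos_two_pi_div_five'] at h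
  linarith

private lemma r2 : Real.cos (2 * π / 15) - Real.cos (7 * π / 15) = (√5 + 1) / 4 := by
  have h := twoSinSin (3 * π / 10) (π / 6)
  rw [show 3 * π / 10 - π / 6 = 2 * π / 15 by ring, show 3 * π / 10 + π / 6 = 7 * π / 15 by ring,
    Real.sin_pi_div_six, show 3 * π / 10 = π / 2 - π / 5 by ring,
    Real.sin_pi_div_two_sub, Real.cos_pi_div_five] at h
  linarith

theorem sporadicTable_solutions :
    ∀ q ∈ sporadicTable,
      (0 < q.1 ∧ q.1 < q.2.2.1 ∧ q.2.2.1 ≤ q.2.2.2 ∧ q.2.2.2 < q.2.1 ∧ q.2.1 ≤ 1/2) ∧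
      Real.sin ((q.1 : ℝ) * π) * Real.sin ((q.2.1 : ℝ) * π)
        = Real.sin ((q.2.2.1 : ℝ) * π) * Real.sin ((q.2.2.2 : ℝ) * π) := by
  have hp5 := Real.cos_pi_div_five
  have hq5 := cos_two_pi_div_five'
  intro q hq
  simp only [sporadicTable, List.mem_cons, List.not_mem_nil, or_false] at hq
  rcases hq with rfl | rfl | rfl | rfl | rfl | rfl | rfl | rfl | rfl | rfl | rfl | rfl | rfl | rfl | rfl
  -- 1: (1/21, 8/21, 1/14, 3/14)
  · refine ⟨by norm_num, key ?_⟩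
    push_cast
    rw [show (1:ℝ)/21 * π - 8/21 * π = -(π/3) by ring,
      show (1:ℝ)/21 * π + 8/21 * π = 3 * π / 7 by ring,
      show (1:ℝ)/14 * π - 3/14 * π = -(π/7) by ring,
      show (1:ℝ)/14 * π + 3/14 * π = 2 * π / 7 by ring,
      Real.cos_neg, Real.cos_neg, Real.cos_pi_div_three]
    linarith [hepta]
  -- 2: (1/14, 5/14, 2/21, 5/21)
  · refine ⟨by norm_num, key ?_⟩
    push_cast
    rw [show (1:ℝ)/14 * π - 5/14 * π = -(2 * π / 7) by ring,
      show (1:ℝ)/14 * π + 5/14 * π = 3 * π / 7 by ring,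
      show (2:ℝ)/21 * π - 5/21 * π = -(π/7) by ring,
      show (2:ℝ)/21 * π + 5/21 * π = π/3 by ring,
      Real.cos_neg, Real.cos_neg, Real.cos_pi_div_three]
    linarith [hepta]
  -- 3: (4/21, 10/21, 3/14, 5/14)
  · refine ⟨by norm_num, key ?_⟩
    push_cast
    rw [show (4:ℝ)/21 * π - 10/21 * π = -(2 * π / 7) by ring,
      show (4:ℝ)/21 * π + 10/21 * π = π - π/3 by ring,
      show (3:ℝ)/14 * π - 5/14 * π = -(π/7) by ring,
      show (3:ℝ)/14 * π + 5/14 * π = π - 3 * π / 7 by ring,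
      Real.cos_neg, Real.cos_neg, Real.cos_pi_sub, Real.cos_pi_sub, Real.cos_pi_div_three]
    linarith [hepta]
  -- 4: (1/20, 9/20, 1/15, 4/15)
  · refine ⟨by norm_num, key ?_⟩
    push_cast
    rw [show (1:ℝ)/20 * π - 9/20 * π = -(2 * π / 5) by ring,
      show (1:ℝ)/20 * π + 9/20 * π = π/2 by ring,
      show (1:ℝ)/15 * π - 4/15 * π = -(π/5) by ring,
      show (1:ℝ)/15 * π + 4/15 * π = π/3 by ring,
      Real.cos_neg, Real.cos_neg, Real.cos_pi_div_two, Real.cos_pi_div_three, hp5, hq5]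
    ring
  -- 5: (2/15, 7/15, 3/20, 7/20)
  · refine ⟨by norm_num, key ?_⟩
    push_cast
    rw [show (2:ℝ)/15 * π - 7/15 * π = -(π/3) by ring,
      show (2:ℝ)/15 * π + 7/15 * π = π - 2 * π / 5 by ring,
      show (3:ℝ)/20 * π - 7/20 * π = -(π/5) by ring,
      show (3:ℝ)/20 * π + 7/20 * π = π/2 by ring,
      Real.cos_neg, Real.cos_neg, Real.cos_pi_sub, Real.cos_pi_div_two, Real.cos_pi_div_three,
      hp5, hq5]
    ring
  -- 6: (1/30, 3/10, 1/15, 2/15)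
  · refine ⟨by norm_num, key ?_⟩
    push_cast
    rw [show (1:ℝ)/30 * π - 3/10 * π = -(4 * π / 15) by ring,
      show (1:ℝ)/30 * π + 3/10 * π = π/3 by ring,
      show (1:ℝ)/15 * π - 2/15 * π = -(π/15) by ring,
      show (1:ℝ)/15 * π + 2/15 * π = π/5 by ring,
      Real.cos_neg, Real.cos_neg, Real.cos_pi_div_three, hp5]
    linarith [r1]
  -- 7: (1/15, 7/15, 1/10, 7/30)
  · refine ⟨by norm_num, key ?_⟩
    push_cast
    rw [show (1:ℝ)/15 * π - 7/15 * π = -(2 * π / 5) by ring,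
      show (1:ℝ)/15 * π + 7/15 * π = π - 7 * π / 15 by ring,
      show (1:ℝ)/10 * π - 7/30 * π = -(2 * π / 15) by ring,
      show (1:ℝ)/10 * π + 7/30 * π = π/3 by ring,
      Real.cos_neg, Real.cos_neg, Real.cos_pi_sub, Real.cos_pi_div_three, hq5]
    linarith [r2]
  -- 8: (1/10, 13/30, 2/15, 4/15)
  · refine ⟨by norm_num, key ?_⟩
    push_cast
    rw [show (1:ℝ)/10 * π - 13/30 * π = -(π/3) by ring,
      show (1:ℝ)/10 * π + 13/30 * π = π - 7 * π / 15 by ring,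
      show (2:ℝ)/15 * π - 4/15 * π = -(2 * π / 15) by ring,
      show (2:ℝ)/15 * π + 4/15 * π = 2 * π / 5 by ring,
      Real.cos_neg, Real.cos_neg, Real.cos_pi_sub, Real.cos_pi_div_three, hq5]
    linarith [r2]
  -- 9: (4/15, 7/15, 3/10, 11/30)
  · refine ⟨by norm_num, key ?_⟩
    push_cast
    rw [show (4:ℝ)/15 * π - 7/15 * π = -(π/5) by ring,
      show (4:ℝ)/15 * π + 7/15 * π = π - 4 * π / 15 by ring,
      show (3:ℝ)/10 * π - 11/30 * π = -(π/15) by ring,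
      show (3:ℝ)/10 * π + 11/30 * π = π - π/3 by ring,
      Real.cos_neg, Real.cos_neg, Real.cos_pi_sub, Real.cos_pi_sub, Real.cos_pi_div_three, hp5]
    linarith [r1]
  -- 10: (1/30, 11/30, 1/10, 1/10)
  · refine ⟨by norm_num, key ?_⟩
    push_cast
    rw [show (1:ℝ)/30 * π - 11/30 * π = -(π/3) by ring,
      show (1:ℝ)/30 * π + 11/30 * π = 2 * π / 5 by ring,
      show (1:ℝ)/10 * π - 1/10 * π = (0:ℝ) by ring,
      show (1:ℝ)/10 * π + 1/10 * π = π/5 by ring,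
      Real.cos_neg, Real.cos_zero, Real.cos_pi_div_three, hp5, hq5]
    ring
  -- 11: (7/30, 13/30, 3/10, 3/10)
  · refine ⟨by norm_num, key ?_⟩
    push_cast
    rw [show (7:ℝ)/30 * π - 13/30 * π = -(π/5) by ring,
      show (7:ℝ)/30 * π + 13/30 * π = π - π/3 by ring,
      show (3:ℝ)/10 * π - 3/10 * π = (0:ℝ) by ring,
      show (3:ℝ)/10 * π + 3/10 * π = π - 2 * π / 5 by ring,
      Real.cos_neg, Real.cos_zero, Real.cos_pi_sub, Real.cos_pi_sub, Real.cos_pi_div_three,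
      hp5, hq5]
    ring
  -- 12: (1/15, 4/15, 1/10, 1/6)
  · refine ⟨by norm_num, key ?_⟩
    push_cast
    rw [show (1:ℝ)/15 * π - 4/15 * π = -(π/5) by ring,
      show (1:ℝ)/15 * π + 4/15 * π = π/3 by ring,
      show (1:ℝ)/10 * π - 1/6 * π = -(π/15) by ring,
      show (1:ℝ)/10 * π + 1/6 * π = 4 * π / 15 by ring,
      Real.cos_neg, Real.cos_neg, Real.cos_pi_div_three, hp5]
    linarith [r1]
  -- 13: (2/15, 7/15, 1/6, 3/10)
  · refine ⟨by norm_num, key ?_⟩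
    push_cast
    rw [show (2:ℝ)/15 * π - 7/15 * π = -(π/3) by ring,
      show (2:ℝ)/15 * π + 7/15 * π = π - 2 * π / 5 by ring,
      show (1:ℝ)/6 * π - 3/10 * π = -(2 * π / 15) by ring,
      show (1:ℝ)/6 * π + 3/10 * π = 7 * π / 15 by ring,
      Real.cos_neg, Real.cos_neg, Real.cos_pi_sub, Real.cos_pi_div_three, hq5]
    linarith [r2]
  -- 14: (1/12, 5/12, 1/10, 3/10)
  · refine ⟨by norm_num, key ?_⟩
    push_cast
    rw [show (1:ℝ)/12 * π - 5/12 * π = -(π/3) by ring,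
      show (1:ℝ)/12 * π + 5/12 * π = π/2 by ring,
      show (1:ℝ)/10 * π - 3/10 * π = -(π/5) by ring,
      show (1:ℝ)/10 * π + 3/10 * π = 2 * π / 5 by ring,
      Real.cos_neg, Real.cos_neg, Real.cos_pi_div_two, Real.cos_pi_div_three, hp5, hq5]
    ring
  -- 15: (1/10, 3/10, 1/6, 1/6)
  · refine ⟨by norm_num, key ?_⟩
    push_cast
    rw [show (1:ℝ)/10 * π - 3/10 * π = -(π/5) by ring,
      show (1:ℝ)/10 * π + 3/10 * π = 2 * π / 5 by ring,
      show (1:ℝ)/6 * π - 1/6 * π = (0:ℝ) by ring,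
      show (1:ℝ)/6 * π + 1/6 * π = π/3 by ring,
      Real.cos_neg, Real.cos_zero, Real.cos_pi_div_three, hp5, hq5]
    ring
end

section
/- For every even integer f ≥ 6, the real number arctan(2·tan(2π/f))/π is irrational; equivalently, there is no rational number q with 0 < q < 1/2 such that tan(qπ) = 2·tan(2π/f). -/
/-!
Write `α = qπ`, `β = q'π`, `u = e^{2iα}`, `v = e^{2iβ}`. The relation `tan α = 2 tan β` is
`sin (α + β) = 3 sin (α - β)`, i.e. `1 - uv = 3 (v - u)` with `u, v` roots of unity of some order
`n`. Being a polynomial relation over `ℚ` at a primitive `n`-th root, it survives every Galois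
conjugation `ζ ↦ ζ ^ j`, `j` prime to `n`: `1 - (uv) ^ j = 3 v ^ j (1 - r ^ j)` with `r = u / v`.
Multiplying over all such `j`, the left side has absolute value at most `2 ^ φ(n)`, whereas
`∏ (1 - r ^ j)` is a power of `Φ_d(1)` (`d` the order of `r`), a nonzero integer unless `r = 1`,
so the right side has absolute value at least `3 ^ φ(n)`. Hence `u = v`, and then `u ^ 2 = 1`
forces `tan α = 0`.
-/

open Real
open scoped Complex
open Complex (I)

open Finset in
theorem MonoidHom.exists_prod_comp_eq_pow_of_surjective {G H M : Type*} [Group G] [Group H]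
    [Fintype G] [Fintype H] [CommMonoid M] (ψ : G →* H) (hψ : Function.Surjective ψ)
    (F : H → M) : ∃ K : ℕ, ∏ g, F (ψ g) = (∏ h, F h) ^ K := by
  classical
  refine ⟨#{g | ψ g = 1}, ?_⟩
  rw [prod_comp F ψ, image_univ_of_surjective hψ, ← prod_pow]
  exact prod_congr rfl fun h _ => by
    rw [MonoidHom.card_fiber_eq_of_mem_range ψ (hψ h) (hψ 1)]

open Polynomial in
theorem IsPrimitiveRoot.prod_units_sub_pow_eq_eval_cyclotomic {R : Type*} [CommRing R]
    [IsDomain R] {d : ℕ} [NeZero d] {s : R} (hs : IsPrimitiveRoot s d) (x : R) :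
    ∏ k : (ZMod d)ˣ, (x - s ^ (k : ZMod d).val) = (cyclotomic d R).eval x := by
  rw [cyclotomic_eq_prod_X_sub_primitiveRoots hs, eval_prod]
  simp only [eval_sub, eval_X, eval_C]
  refine Finset.prod_bij (fun k _ => s ^ (k : ZMod d).val) (fun k _ => ?_) (fun k _ k' _ h => ?_)
    (fun μ hμ => ?_) (fun _ _ => rfl)
  · exact (mem_primitiveRoots (NeZero.pos d)).mpr
      (hs.pow_of_coprime _ (ZMod.val_coe_unit_coprime k))
  · exact Units.ext (ZMod.val_injective d (hs.pow_inj (ZMod.val_lt _) (ZMod.val_lt _) h))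
  · have hμ' := (mem_primitiveRoots (NeZero.pos d)).mp hμ
    obtain ⟨i, hid, rfl⟩ := hs.eq_pow_of_pow_eq_one hμ'.pow_eq_one
    have hi : i.Coprime d := (hs.pow_iff_coprime (NeZero.pos d) i).mp hμ'
    refine ⟨ZMod.unitOfCoprime i hi, Finset.mem_univ _, ?_⟩
    rw [ZMod.coe_unitOfCoprime, ZMod.val_natCast, Nat.mod_eq_of_lt hid]

open Polynomial in
theorem exists_intCast_eq_prod_units_one_sub_pow {R : Type*} [CommRing R] [IsDomain R]
    {n : ℕ} [NeZero n] {r : R} (hr : r ^ n = 1) :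
    ∃ m : ℤ, ∏ j : (ZMod n)ˣ, (1 - r ^ (j : ZMod n).val) = m := by
  have hd : orderOf r ∣ n := orderOf_dvd_of_pow_eq_one hr
  have : NeZero (orderOf r) :=
    ⟨(isOfFinOrder_iff_pow_eq_one.mpr ⟨n, NeZero.pos n, hr⟩).orderOf_pos.ne'⟩
  have hval (j : (ZMod n)ˣ) :
      r ^ (j : ZMod n).val = r ^ (ZMod.unitsMap hd j : ZMod (orderOf r)).val := by
    rw [ZMod.unitsMap_val, ZMod.cast_eq_val, ZMod.val_natCast, pow_mod_orderOf]
  obtain ⟨K, hK⟩ := (ZMod.unitsMap hd).exists_prod_comp_eq_pow_of_surjective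
    (ZMod.unitsMap_surjective hd) fun k => 1 - r ^ (k : ZMod (orderOf r)).val
  refine ⟨(cyclotomic (orderOf r) ℤ).eval 1 ^ K, ?_⟩
  simp_rw [hval, hK, (IsPrimitiveRoot.orderOf r).prod_units_sub_pow_eq_eval_cyclotomic]
  rw [← map_cyclotomic_int, eval_map, eval₂_at_one, eq_intCast, Int.cast_pow]

theorem prod_units_one_sub_pow_ne_zero {R : Type*} [CommRing R] [IsDomain R] {n : ℕ}
    [NeZero n] {r : R} (hr : r ^ n = 1) (hr1 : r ≠ 1) :
    ∏ j : (ZMod n)ˣ, (1 - r ^ (j : ZMod n).val) ≠ 0 :=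
  Finset.prod_ne_zero_iff.mpr fun j _ h => hr1 <| by
    simpa [(ZMod.val_coe_unit_coprime j).gcd_eq_one] using
      pow_gcd_eq_one.mpr ⟨(sub_eq_zero.mp h).symm, hr⟩

theorem norm_prod_units_one_sub_pow_le {n : ℕ} [NeZero n] {s : ℂ} (hs : ‖s‖ = 1) :
    ‖∏ j : (ZMod n)ˣ, (1 - s ^ (j : ZMod n).val)‖ ≤ 2 ^ n.totient := by
  rw [norm_prod, ← ZMod.card_units_eq_totient, ← Finset.card_univ, ← Finset.prod_const]
  refine Finset.prod_le_prod (fun _ _ => norm_nonneg _) fun j _ => ?_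
  calc ‖1 - s ^ (j : ZMod n).val‖ ≤ ‖(1 : ℂ)‖ + ‖s ^ (j : ZMod n).val‖ := norm_sub_le _ _
    _ = 2 := by rw [norm_pow, hs]; norm_num

open Polynomial in
theorem IsPrimitiveRoot.aeval_pow_eq_zero_of_coprime {K : Type*} [Field K] [CharZero K]
    {ζ : K} {n : ℕ} (hζ : IsPrimitiveRoot ζ n) (hn : 0 < n) {P : ℚ[X]} (hP : aeval ζ P = 0)
    {j : ℕ} (hj : j.Coprime n) : aeval (ζ ^ j) P = 0 := by
  obtain ⟨Q, rfl⟩ : cyclotomic n ℚ ∣ P :=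
    cyclotomic_eq_minpoly_rat hζ hn ▸ minpoly.dvd ℚ ζ hP
  have hroot := (hζ.pow_of_coprime j hj).isRoot_cyclotomic hn
  rw [map_mul, aeval_def, eval₂_eq_eval_map, map_cyclotomic, hroot.eq_zero, zero_mul]

open Polynomial in
theorem one_sub_mul_pow_eq_mul_sub_pow {u v : ℂ} {n : ℕ} [NeZero n] (hu : u ^ n = 1)
    (hv : v ^ n = 1) {c : ℚ} (h : 1 - u * v = c * (v - u)) {j : ℕ} (hj : j.Coprime n) :
    1 - (u * v) ^ j = c * (v ^ j - u ^ j) := by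
  have hζ := Complex.isPrimitiveRoot_exp n (NeZero.ne n)
  obtain ⟨a, -, rfl⟩ := hζ.eq_pow_of_pow_eq_one hu
  obtain ⟨b, -, rfl⟩ := hζ.eq_pow_of_pow_eq_one hv
  have heval (w : ℂ) : aeval w (1 - X ^ (a + b) - C c * X ^ b + C c * X ^ a : ℚ[X]) =
      1 - w ^ (a + b) - c * w ^ b + c * w ^ a := by simp
  have hP := hζ.aeval_pow_eq_zero_of_coprime (NeZero.pos n)
    (P := 1 - X ^ (a + b) - C c * X ^ b + C c * X ^ a)
    (by rw [heval, pow_add]; linear_combination h) hj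
  rw [heval] at hP
  simp only [← pow_mul, ← pow_add] at hP ⊢
  linear_combination hP

theorem eq_of_one_sub_mul_eq_intCast_mul_sub {u v : ℂ} {n : ℕ} [NeZero n] (hu : u ^ n = 1)
    (hv : v ^ n = 1) {c : ℤ} (hc : 2 < |c|) (h : 1 - u * v = c * (v - u)) : u = v := by
  by_contra huv
  have hv0 : v ≠ 0 := by rintro rfl; simp [NeZero.ne n] at hv
  set r := u * v⁻¹
  have hr : r ^ n = 1 := by simp [r, mul_pow, hu, hv]
  have hr1 : r ≠ 1 := fun h1 => huv ((mul_inv_eq_one₀ hv0).mp h1)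
  have hconj (j : (ZMod n)ˣ) : 1 - (u * v) ^ (j : ZMod n).val =
      c * v ^ (j : ZMod n).val * (1 - r ^ (j : ZMod n).val) := by
    rw [one_sub_mul_pow_eq_mul_sub_pow hu hv (c := c) (by exact_mod_cast h)
      (ZMod.val_coe_unit_coprime j)]
    have hvr : v * r = u := by simp only [r]; field_simp
    rw [← hvr, mul_pow]
    push_cast
    ring
  obtain ⟨m, hm⟩ := exists_intCast_eq_prod_units_one_sub_pow hr
  have hm0 : m ≠ 0 := by
    rintro rfl
    exact prod_units_one_sub_pow_ne_zero hr hr1 (by simp [hm])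
  have hnorm_v : ‖∏ j : (ZMod n)ˣ, v ^ (j : ZMod n).val‖ = 1 := by
    simp [norm_prod, Complex.norm_eq_one_of_pow_eq_one hv (NeZero.ne n)]
  have hle := norm_prod_units_one_sub_pow_le (n := n)
    (s := u * v) (by simp [Complex.norm_eq_one_of_pow_eq_one hu (NeZero.ne n),
      Complex.norm_eq_one_of_pow_eq_one hv (NeZero.ne n)])
  rw [Finset.prod_congr rfl fun j _ => hconj j, Finset.prod_mul_distrib, Finset.prod_mul_distrib,
    hm, Finset.prod_const, Finset.card_univ, ZMod.card_units_eq_totient, norm_mul, norm_mul,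
    norm_pow, hnorm_v, Complex.norm_intCast, Complex.norm_intCast] at hle
  have hφ : n.totient ≠ 0 := (Nat.totient_pos.mpr (NeZero.pos n)).ne'
  have hm1 : (1 : ℝ) ≤ |(m : ℝ)| := by exact_mod_cast Int.one_le_abs hm0
  have hlt : (2 : ℝ) ^ n.totient < |(c : ℝ)| ^ n.totient :=
    pow_lt_pow_left₀ (by exact_mod_cast hc) zero_le_two hφ
  nlinarith [pow_nonneg (abs_nonneg (c : ℝ)) n.totient]

theorem one_sub_exp_mul_exp_eq_three_mul_sub_of_tan_eq {α β : ℝ} (hα : cos α ≠ 0)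
    (hβ : cos β ≠ 0) (h : tan α = 2 * tan β) :
    1 - cexp (2 * α * I) * cexp (2 * β * I) =
      3 * (cexp (2 * β * I) - cexp (2 * α * I)) := by
  rw [tan_eq_sin_div_cos, tan_eq_sin_div_cos] at h
  field_simp at h
  have hC : Complex.sin α * Complex.cos β = 2 * Complex.cos α * Complex.sin β := by
    exact_mod_cast congrArg Complex.ofReal (by linear_combination h)
  rw [Complex.sin, Complex.sin, Complex.cos, Complex.cos, neg_mul, neg_mul, Complex.exp_neg,
    Complex.exp_neg] at hC
  rw [mul_assoc 2 (α : ℂ), mul_assoc 2 (β : ℂ), two_mul, two_mul, Complex.exp_add,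
    Complex.exp_add]
  have hx := Complex.exp_ne_zero (α * I)
  have hy := Complex.exp_ne_zero (β * I)
  generalize cexp (α * I) = x, cexp (β * I) = y at *
  field_simp at hC
  linear_combination -hC

theorem Complex.exp_two_mul_rat_mul_pi_mul_I_pow_den (q : ℚ) :
    cexp (2 * ((q * π : ℝ) : ℂ) * I) ^ q.den = 1 := by
  rw [← exp_nat_mul, ← exp_int_mul_two_pi_mul_I q.num]
  have hq : (q : ℂ) * q.den = q.num := by exact_mod_cast Rat.mul_den_eq_num q
  congr 1
  push_cast
  linear_combination 2 * π * I * hq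

theorem tan_rat_mul_pi_eq_zero_of_eq_two_mul_tan {q q' : ℚ}
    (h : tan (q * π) = 2 * tan (q' * π)) : tan (q * π) = 0 := by
  by_cases hα : cos (q * π) = 0
  · rw [tan_eq_sin_div_cos, hα, div_zero]
  by_cases hβ : cos (q' * π) = 0
  · rw [h, tan_eq_sin_div_cos, hβ, div_zero, mul_zero]
  have hE := one_sub_exp_mul_exp_eq_three_mul_sub_of_tan_eq hα hβ h
  set u := cexp (2 * ((q * π : ℝ) : ℂ) * I)
  have hu : u ^ (q.den * q'.den) = 1 := by
    rw [pow_mul, Complex.exp_two_mul_rat_mul_pi_mul_I_pow_den, one_pow]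
  have hv : cexp (2 * ((q' * π : ℝ) : ℂ) * I) ^ (q.den * q'.den) = 1 := by
    rw [mul_comm q.den, pow_mul, Complex.exp_two_mul_rat_mul_pi_mul_I_pow_den, one_pow]
  have : NeZero (q.den * q'.den) := ⟨Nat.mul_ne_zero q.den_ne_zero q'.den_ne_zero⟩
  have huv := eq_of_one_sub_mul_eq_intCast_mul_sub hu hv (c := 3) (by norm_num)
    (by exact_mod_cast hE)
  rw [← huv, sub_self, mul_zero, sub_eq_zero, eq_comm, mul_self_eq_one_iff] at hE
  have him : u.im = sin (2 * (q * π)) := by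
    simp only [u, ← Complex.exp_ofReal_mul_I_im]
    push_cast
    ring_nf
  have hsin : sin (2 * (q * π)) = 0 := by
    rcases hE with hE | hE <;> simp [← him, hE]
  have hs : sin (q * π) = 0 := by simpa [sin_two_mul, hα] using hsin
  rw [tan_eq_sin_div_cos, hs, zero_div]

theorem arctan_two_tan_irrational_general (f : ℕ) (hf : 6 ≤ f) :
    Irrational (arctan (2 * tan (2 * π / f)) / π) ∧
    ¬ ∃ q : ℚ, 0 < q ∧ q < 1/2 ∧ tan ((q : ℝ) * π) = 2 * tan (2 * π / f) := by
  have hβ : 2 * π / f = ((2 / f : ℚ) : ℝ) * π := by push_cast; ring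
  have key (q : ℚ) (h : tan (q * π) = 2 * tan (2 * π / f)) : tan (q * π) = 0 :=
    tan_rat_mul_pi_eq_zero_of_eq_two_mul_tan (q' := 2 / f) (hβ ▸ h)
  have hf' : (6 : ℝ) ≤ f := by exact_mod_cast hf
  have htan : 0 < tan (2 * π / f) := tan_pos_of_pos_of_lt_pi_div_two (by positivity)
    (by rw [div_lt_iff₀ (by linarith)]; nlinarith [pi_pos])
  constructor
  · rintro ⟨q, hq⟩
    have hqπ : tan (q * π) = 2 * tan (2 * π / f) := by
      rw [hq, div_mul_cancel₀ _ pi_ne_zero, tan_arctan]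
    linarith [key q hqπ]
  · rintro ⟨q, hq0, hq2, h⟩
    have hq2' : (q : ℝ) < 1 / 2 := (Rat.cast_lt.mpr hq2).trans_eq (by norm_num)
    have : 0 < tan (q * π) := tan_pos_of_pos_of_lt_pi_div_two (by positivity)
      (by nlinarith [pi_pos])
    linarith [key q h]

theorem arctan_two_tan_irrational (f : ℕ) (hEven : Even f) (hf : 6 ≤ f) :
    Irrational (arctan (2 * tan (2 * π / f)) / π) ∧
    ¬ ∃ q : ℚ, 0 < q ∧ q < 1/2 ∧ tan ((q : ℝ) * π) = 2 * tan (2 * π / f) :=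
  arctan_two_tan_irrational_general f hf
end

section
/- Let f > 12 be an even integer and set α = 7/12 − 1/f, β = 1/3 + 4/f, γ = 5/6 − 2/f, δ = 1/4 + 3/f. Then the nonnegative integers (k,l,m,n) with k + n even satisfying kα + lβ + mγ + nδ = 2 are exactly the following: (3,0,0,1) and (0,1,2,0), which are solutions for every such f; and additionally (1,2,0,1) if and only if f = 20; (0,4,0,0), (0,1,1,2), (0,1,0,4) if and only if f = 24; (2,2,0,0), (1,1,0,3), (0,3,0,2), (0,0,0,6) if and only if f = 36; (0,5,0,0), (0,3,1,0), (0,2,0,4), (0,0,1,4) if and only if f = 60; (1,3,0,1), (1,0,0,5) if and only if f = 84; (0,1,0,6), (0,4,0,2) if and only if f = 132. -/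
set_option maxHeartbeats 4000000 in
theorem table_2_1_vertices (f : ℕ) (hEven : Even f) (hf : 12 < f)
    (k l m n : ℕ) (hpar : Even (k + n)) :
    ((k : ℚ) * (7/12 - 1/(f : ℚ)) + (l : ℚ) * (1/3 + 4/(f : ℚ))
      + (m : ℚ) * (5/6 - 2/(f : ℚ)) + (n : ℚ) * (1/4 + 3/(f : ℚ)) = 2)
    ↔ ((k, l, m, n) = (3, 0, 0, 1) ∨
       (k, l, m, n) = (0, 1, 2, 0) ∨
       (f = 20 ∧ (k, l, m, n) = (1, 2, 0, 1)) ∨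
       (f = 24 ∧ ((k, l, m, n) = (0, 4, 0, 0) ∨ (k, l, m, n) = (0, 1, 1, 2) ∨
                  (k, l, m, n) = (0, 1, 0, 4))) ∨
       (f = 36 ∧ ((k, l, m, n) = (2, 2, 0, 0) ∨ (k, l, m, n) = (1, 1, 0, 3) ∨
                  (k, l, m, n) = (0, 3, 0, 2) ∨ (k, l, m, n) = (0, 0, 0, 6))) ∨
       (f = 60 ∧ ((k, l, m, n) = (0, 5, 0, 0) ∨ (k, l, m, n) = (0, 3, 1, 0) ∨
                  (k, l, m, n) = (0, 2, 0, 4) ∨ (k, l, m, n) = (0, 0, 1, 4))) ∨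
       (f = 84 ∧ ((k, l, m, n) = (1, 3, 0, 1) ∨ (k, l, m, n) = (1, 0, 0, 5))) ∨
       (f = 132 ∧ ((k, l, m, n) = (0, 1, 0, 6) ∨ (k, l, m, n) = (0, 4, 0, 2)))) := by
  have hf14 : 14 ≤ f := by obtain ⟨t, rfl⟩ := hEven; omega
  have hE2 : f % 2 = 0 := by obtain ⟨t, rfl⟩ := hEven; omega
  have hfQ : (f:ℚ) ≠ 0 := Nat.cast_ne_zero.mpr (by omega)
  have key : ((k : ℚ) * (7/12 - 1/(f : ℚ)) + (l : ℚ) * (1/3 + 4/(f : ℚ))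
      + (m : ℚ) * (5/6 - 2/(f : ℚ)) + (n : ℚ) * (1/4 + 3/(f : ℚ)) = 2)
      ↔ 7*k*f + 4*l*f + 48*l + 10*m*f + 3*n*f + 36*n = 24*f + 12*k + 24*m := by
    rw [← sub_eq_zero]
    have e : ((k : ℚ) * (7/12 - 1/(f : ℚ)) + (l : ℚ) * (1/3 + 4/(f : ℚ))
        + (m : ℚ) * (5/6 - 2/(f : ℚ)) + (n : ℚ) * (1/4 + 3/(f : ℚ)) - 2)
        = (((7*k*f + 4*l*f + 48*l + 10*m*f + 3*n*f + 36*n : ℕ) : ℚ)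
           - ((24*f + 12*k + 24*m : ℕ) : ℚ)) / (12*f) := by
      push_cast
      field_simp
      ring
    rw [e, div_eq_zero_iff, sub_eq_zero]
    constructor
    · rintro (h | h)
      · exact_mod_cast h
      · exfalso; revert h; positivity
    · intro h; left; exact_mod_cast h
  rw [key]
  obtain ⟨p, hp⟩ := hpar
  constructor
  · intro heq
    have heqZ : 7*(k:ℤ)*f + 4*l*f + 48*l + 10*m*f + 3*n*f + 36*n
        = 24*f + 12*k + 24*m := by exact_mod_cast heq
    have hfZ : (14:ℤ) ≤ f := by exact_mod_cast hf14
    have hkZ : (0:ℤ) ≤ k := Int.natCast_nonneg k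
    have hlZ : (0:ℤ) ≤ l := Int.natCast_nonneg l
    have hmZ : (0:ℤ) ≤ m := Int.natCast_nonneg m
    have hnZ : (0:ℤ) ≤ n := Int.natCast_nonneg n
    have hk : k ≤ 3 := by
      by_contra hc; push_neg at hc
      have h4 : (4:ℤ) ≤ k := by exact_mod_cast hc
      nlinarith [mul_nonneg hlZ (by linarith : (0:ℤ) ≤ 4*(f:ℤ)+48),
        mul_nonneg hnZ (by linarith : (0:ℤ) ≤ 3*(f:ℤ)+36),
        mul_nonneg hmZ (by linarith : (0:ℤ) ≤ 10*(f:ℤ)-24),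
        mul_le_mul_of_nonneg_right h4 (by linarith : (0:ℤ) ≤ 7*(f:ℤ)-12)]
    have hm : m ≤ 2 := by
      by_contra hc; push_neg at hc
      have h3 : (3:ℤ) ≤ m := by exact_mod_cast hc
      nlinarith [mul_nonneg hlZ (by linarith : (0:ℤ) ≤ 4*(f:ℤ)+48),
        mul_nonneg hnZ (by linarith : (0:ℤ) ≤ 3*(f:ℤ)+36),
        mul_nonneg hkZ (by linarith : (0:ℤ) ≤ 7*(f:ℤ)-12),
        mul_le_mul_of_nonneg_right h3 (by linarith : (0:ℤ) ≤ 10*(f:ℤ)-24)]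
    have hl : l ≤ 5 := by
      by_contra hc; push_neg at hc
      have h6 : (6:ℤ) ≤ l := by exact_mod_cast hc
      have hk3 : (k:ℤ) ≤ 3 := by exact_mod_cast hk
      have hm2 : (m:ℤ) ≤ 2 := by exact_mod_cast hm
      nlinarith [mul_nonneg hnZ (by linarith : (0:ℤ) ≤ 3*(f:ℤ)+36),
        mul_nonneg hkZ (by linarith : (0:ℤ) ≤ 7*(f:ℤ)-12),
        mul_nonneg hmZ (by linarith : (0:ℤ) ≤ 10*(f:ℤ)-24),
        mul_le_mul_of_nonneg_right h6 (by linarith : (0:ℤ) ≤ 4*(f:ℤ)+48)]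
    have hn : n ≤ 7 := by
      by_contra hc; push_neg at hc
      have h8 : (8:ℤ) ≤ n := by exact_mod_cast hc
      have hk3 : (k:ℤ) ≤ 3 := by exact_mod_cast hk
      have hm2 : (m:ℤ) ≤ 2 := by exact_mod_cast hm
      nlinarith [mul_nonneg hlZ (by linarith : (0:ℤ) ≤ 4*(f:ℤ)+48),
        mul_nonneg hkZ (by linarith : (0:ℤ) ≤ 7*(f:ℤ)-12),
        mul_nonneg hmZ (by linarith : (0:ℤ) ≤ 10*(f:ℤ)-24),
        mul_le_mul_of_nonneg_right h8 (by linarith : (0:ℤ) ≤ 3*(f:ℤ)+36)]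
    clear heqZ hfZ hkZ hlZ hmZ hnZ key hfQ
    simp only [Prod.mk.injEq]
    interval_cases k <;> interval_cases l <;> interval_cases m <;>
      interval_cases n <;> simp <;> omega
  · intro h
    simp only [Prod.mk.injEq] at h
    rcases h with ⟨rfl,rfl,rfl,rfl⟩ | ⟨rfl,rfl,rfl,rfl⟩ |
      ⟨rfl,rfl,rfl,rfl,rfl⟩ |
      ⟨rfl, ⟨rfl,rfl,rfl,rfl⟩ | ⟨rfl,rfl,rfl,rfl⟩ | ⟨rfl,rfl,rfl,rfl⟩⟩ |
      ⟨rfl, ⟨rfl,rfl,rfl,rfl⟩ | ⟨rfl,rfl,rfl,rfl⟩ | ⟨rfl,rfl,rfl,rfl⟩ | ⟨rfl,rfl,rfl,rfl⟩⟩ |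
      ⟨rfl, ⟨rfl,rfl,rfl,rfl⟩ | ⟨rfl,rfl,rfl,rfl⟩ | ⟨rfl,rfl,rfl,rfl⟩ | ⟨rfl,rfl,rfl,rfl⟩⟩ |
      ⟨rfl, ⟨rfl,rfl,rfl,rfl⟩ | ⟨rfl,rfl,rfl,rfl⟩⟩ |
      ⟨rfl, ⟨rfl,rfl,rfl,rfl⟩ | ⟨rfl,rfl,rfl,rfl⟩⟩ <;> omega
end

section
/- Let γ be a real number with 1/3 < γ < 1/2 and set α = 1/6 + γ/2, β = 2γ, δ = 1/2 + γ/2. If k,l,m,n are nonnegative integers with l ≥ 1 and k + n even such that kα + lβ + mγ + nδ = 2, then (k,l,m,n) is one of (0,2,1,0), (1,1,0,1), (2,1,1,0), (0,1,3,0); moreover these force γ = 2/5, 4/9, 5/12, 2/5 respectively. -/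
theorem beta_vertices_case5 (γ : ℝ) (hγ₁ : 1/3 < γ) (hγ₂ : γ < 1/2)
    (k l m n : ℕ) (hl : 1 ≤ l) (hpar : Even (k + n))
    (heq : (k : ℝ) * (1/6 + γ/2) + (l : ℝ) * (2*γ) + (m : ℝ) * γ
      + (n : ℝ) * (1/2 + γ/2) = 2) :
    ((k, l, m, n) = (0, 2, 1, 0) ∧ γ = 2/5) ∨
    ((k, l, m, n) = (1, 1, 0, 1) ∧ γ = 4/9) ∨
    ((k, l, m, n) = (2, 1, 1, 0) ∧ γ = 5/12) ∨
    ((k, l, m, n) = (0, 1, 3, 0) ∧ γ = 2/5) := by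
  have hb : ((k + 2*n + 2*l + m : ℕ) : ℝ) < 6 := by push_cast; nlinarith
  have hb' : k + 2*n + 2*l + m < 6 := by exact_mod_cast hb
  have hk : k ≤ 5 := by omega
  have hl2 : l ≤ 2 := by omega
  have hm : m ≤ 3 := by omega
  have hn : n ≤ 1 := by omega
  interval_cases k <;> interval_cases l <;> interval_cases m <;> interval_cases n <;>
    simp_all <;> first
      | linarith
      | (exact absurd hpar (by decide))
end

section
/- Let γ be a real number with 4/15 < γ < 1/3 and set α = 1/6 + γ/2, β = 2γ, δ = 1/2 + 3γ/2. Then there are no nonnegative integers k,l,m,n with n ≥ 1 and k + n even such that kα + lβ + mγ + nδ = 2. -/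
theorem no_delta_vertex_case6 (γ : ℝ) (hγ₁ : 4/15 < γ) (hγ₂ : γ < 1/3) :
    ¬ ∃ k l m n : ℕ, 1 ≤ n ∧ Even (k + n) ∧
      (k : ℝ) * (1/6 + γ/2) + (l : ℝ) * (2*γ) + (m : ℝ) * γ
        + (n : ℝ) * (1/2 + 3*γ/2) = 2 := by
  rintro ⟨k, l, m, n, hn, ⟨j, hj⟩, heq⟩
  -- s = k + 3n, t = k + 4l + 2m + 3n : the equation says s + 3 t γ = 12
  have h6 : ((k + 3*n : ℕ) : ℝ) + 3 * ((k + 4*l + 2*m + 3*n : ℕ) : ℝ) * γ = 12 := by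
    push_cast
    linear_combination 6 * heq
  have ht : (3 : ℝ) ≤ ((k + 4*l + 2*m + 3*n : ℕ) : ℝ) := by
    have : 3 ≤ k + 4*l + 2*m + 3*n := by omega
    exact_mod_cast this
  have h1 : (12 : ℝ) < ((k + 3*n : ℕ) : ℝ) + ((k + 4*l + 2*m + 3*n : ℕ) : ℝ) := by
    nlinarith
  have h2 : 5 * ((k + 3*n : ℕ) : ℝ) + 4 * ((k + 4*l + 2*m + 3*n : ℕ) : ℝ) < 60 := by
    nlinarith
  have h1n : 12 < (k + 3*n) + (k + 4*l + 2*m + 3*n) := by exact_mod_cast h1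
  have h2n : 5 * (k + 3*n) + 4 * (k + 4*l + 2*m + 3*n) < 60 := by exact_mod_cast h2
  omega
end

section
/- Let f > 8 be an even integer and set α = 4/3 − 2/(3f), β = 4/f, γ = 2/3 − 4/(3f), δ = 2/f. Suppose k,l,m,n are nonnegative integers with k = n and k ≤ 1 satisfying kα + lβ + mγ + nδ = 2. Then (k,l,m,n) is one of the following: (1,(f−2)/6,0,1) (possible only when 6 divides f−2); (1,0,1,1); (0,f/2,0,0); (0,(f+1)/3,1,0) (possible only when 3 divides f+1); (0,(f+4)/6,2,0) (possible only when 6 divides f+4); (0,1,3,0). Conversely each of these satisfies the equation. -/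
set_option maxHeartbeats 1000000 in
theorem avc_third_infinite_sequence (f : ℕ) (hEven : Even f) (hf : 8 < f)
    (k l m n : ℕ) (hkn : k = n) (hk : k ≤ 1) :
    ((k : ℚ) * (4/3 - 2/(3*(f : ℚ))) + (l : ℚ) * (4/(f : ℚ))
      + (m : ℚ) * (2/3 - 4/(3*(f : ℚ))) + (n : ℚ) * (2/(f : ℚ)) = 2)
    ↔ ((k = 1 ∧ m = 0 ∧ n = 1 ∧ 6 * l + 2 = f) ∨
       (k, l, m, n) = (1, 0, 1, 1) ∨
       (k = 0 ∧ m = 0 ∧ n = 0 ∧ 2 * l = f) ∨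
       (k = 0 ∧ m = 1 ∧ n = 0 ∧ 3 * l = f + 1) ∨
       (k = 0 ∧ m = 2 ∧ n = 0 ∧ 6 * l = f + 4) ∨
       (k, l, m, n) = (0, 1, 3, 0)) := by
  obtain ⟨t, ht⟩ := hEven
  have hf10 : 10 ≤ f := by omega
  have hf0 : (f : ℚ) ≠ 0 := Nat.cast_ne_zero.mpr (by omega)
  have h3f : (3*(f:ℚ)) ≠ 0 := by
    simp [hf0]
  have expand : 3*(f:ℚ) * ((k : ℚ) * (4/3 - 2/(3*(f : ℚ))) + (l : ℚ) * (4/(f : ℚ))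
      + (m : ℚ) * (2/3 - 4/(3*(f : ℚ))) + (n : ℚ) * (2/(f : ℚ)))
      = (k:ℚ)*(4*f) + 12*l + m*(2*f) + 6*n - 2*k - 4*m := by
    field_simp
    ring
  have key : ((k : ℚ) * (4/3 - 2/(3*(f : ℚ))) + (l : ℚ) * (4/(f : ℚ))
      + (m : ℚ) * (2/3 - 4/(3*(f : ℚ))) + (n : ℚ) * (2/(f : ℚ)) = 2)
      ↔ (k*(4*f) + 12*l + m*(2*f) + 6*n = 6*f + 2*k + 4*m) := by
    rw [← mul_right_inj' h3f, expand, ← @Nat.cast_inj ℚ]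
    push_cast
    constructor <;> intro h <;> linarith
  rw [key]
  simp only [Prod.mk.injEq]
  constructor
  · intro h
    have hm : m ≤ 3 := by
      by_contra hm'
      push_neg at hm'
      have hm4 : 4 ≤ m := hm'
      obtain ⟨g, hg⟩ : ∃ g, 2*f = g + 4 := ⟨2*f-4, by omega⟩
      have h2 : 4*g ≤ m*g := Nat.mul_le_mul_right _ hm4
      have h3 : m*(2*f) = m*g + 4*m := by rw [hg]; ring
      generalize hA : k*(4*f) = A at h
      generalize hB : m*(2*f) = B at h h3
      generalize hC : m*g = C at h2 h3
      omega
    have hk2 : k = 0 ∨ k = 1 := by omega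
    have hm2 : m = 0 ∨ m = 1 ∨ m = 2 ∨ m = 3 := by omega
    rcases hk2 with rfl | rfl <;> rcases hm2 with rfl | rfl | rfl | rfl <;>
      simp only [Nat.zero_mul, Nat.one_mul] at h <;> omega
  · intro h
    rcases h with ⟨rfl, rfl, rfl, hfe⟩ | ⟨rfl, rfl, rfl, rfl⟩ | ⟨rfl, rfl, rfl, hfe⟩ |
      ⟨rfl, rfl, rfl, hfe⟩ | ⟨rfl, rfl, rfl, hfe⟩ | ⟨rfl, rfl, rfl, rfl⟩ <;> omega
end

section
/- Let α be a real number with 1/6 < α ≤ 5/18 and set β = 2/3 + 2α, γ = 1/3, δ = 3α. If k,l,m,n are nonnegative integers with l ≥ 1, n ≥ 1, and k + n even such that kα + lβ + mγ + nδ = 2, then (k,l,m,n) = (1,1,0,1) and α = 2/9 (so (α,β,γ,δ) = (2/9, 10/9, 1/3, 2/3)). -/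
theorem beta_delta_vertex_forces_abd (α : ℝ) (hα₁ : 1/6 < α) (hα₂ : α ≤ 5/18)
    (k l m n : ℕ) (hl : 1 ≤ l) (hn : 1 ≤ n) (hpar : Even (k + n))
    (heq : (k : ℝ) * α + (l : ℝ) * (2/3 + 2*α) + (m : ℝ) * (1/3)
      + (n : ℝ) * (3*α) = 2) :
    (k, l, m, n) = (1, 1, 0, 1) ∧ α = 2/9 := by
  have hk0 : (0:ℝ) ≤ (k:ℝ) := Nat.cast_nonneg k
  have hm0 : (0:ℝ) ≤ (m:ℝ) := Nat.cast_nonneg m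
  have hl1 : (1:ℝ) ≤ (l:ℝ) := by exact_mod_cast hl
  have hn1 : (1:ℝ) ≤ (n:ℝ) := by exact_mod_cast hn
  have hleq : l = 1 := by
    by_contra h
    have h2 : (2:ℝ) ≤ (l:ℝ) := by
      have : 2 ≤ l := by omega
      exact_mod_cast this
    nlinarith
  have hneq : n = 1 := by
    by_contra h
    have h2 : (2:ℝ) ≤ (n:ℝ) := by
      have : 2 ≤ n := by omega
      exact_mod_cast this
    nlinarith
  subst hleq hneq
  have hkle : k ≤ 2 := by
    by_contra h
    have h3 : (3:ℝ) ≤ (k:ℝ) := by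
      have : 3 ≤ k := by omega
      exact_mod_cast this
    nlinarith
  have hmle : m ≤ 1 := by
    by_contra h
    have h2 : (2:ℝ) ≤ (m:ℝ) := by
      have : 2 ≤ m := by omega
      exact_mod_cast this
    nlinarith
  interval_cases k <;> interval_cases m <;>
    simp_all <;> push_cast at heq ⊢ <;>
    first
      | (exfalso; omega)
      | exact absurd hpar (by decide)
      | (constructor <;> nlinarith)
      | nlinarith
end

section
/- Let γ be a real number with 2/15 < γ ≤ 2/5 and set α = 3γ/4, β = 1 + γ/2, δ = 2/3 + γ/4. If k,l,m,n are nonnegative integers with l ≥ 1, n ≥ 1, and k + n even such that kα + lβ + mγ + nδ = 2, then (k,l,m,n) = (1,1,0,1) and γ = 2/9 (so (α,β,γ,δ) = (1/6, 10/9, 2/9, 13/18)). -/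
theorem beta_delta_vertex_forces_abd' (γ : ℝ) (hγ₁ : 2/15 < γ) (hγ₂ : γ ≤ 2/5)
    (k l m n : ℕ) (hl : 1 ≤ l) (hn : 1 ≤ n) (hpar : Even (k + n))
    (heq : (k : ℝ) * (3*γ/4) + (l : ℝ) * (1 + γ/2) + (m : ℝ) * γ
      + (n : ℝ) * (2/3 + γ/4) = 2) :
    (k, l, m, n) = (1, 1, 0, 1) ∧ γ = 2/9 := by
  have hk0 : (0:ℝ) ≤ (k:ℝ) := Nat.cast_nonneg k
  have hm0 : (0:ℝ) ≤ (m:ℝ) := Nat.cast_nonneg m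
  have hl1 : (1:ℝ) ≤ (l:ℝ) := by exact_mod_cast hl
  have hn1 : (1:ℝ) ≤ (n:ℝ) := by exact_mod_cast hn
  have hl2 : l < 2 := by
    by_contra h
    push_neg at h
    have : (2:ℝ) ≤ (l:ℝ) := by exact_mod_cast h
    nlinarith
  have hn2 : n < 2 := by
    by_contra h
    push_neg at h
    have : (2:ℝ) ≤ (n:ℝ) := by exact_mod_cast h
    nlinarith
  have hk3 : k < 3 := by
    by_contra h
    push_neg at h
    have : (3:ℝ) ≤ (k:ℝ) := by exact_mod_cast h
    nlinarith
  have hm2 : m < 2 := by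
    by_contra h
    push_neg at h
    have : (2:ℝ) ≤ (m:ℝ) := by exact_mod_cast h
    nlinarith
  interval_cases l <;> interval_cases n <;> interval_cases k <;> interval_cases m <;>
    simp_all <;> first
      | (exact absurd hpar (by decide))
      | (constructor <;> linarith)
      | linarith
      | omega
end
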